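/- The monitor-state policy refinement transfers to traces: if a policy Π over monitor states satisfies (Π s op arg = true → ∀ h, abstracts s h → Σ h Ctx op arg), the state s₀ abstracts the current history h, and the state-update function upd preserves abstraction (abstracts s h → abstracts (upd s e) (e::h)), then a sequence of context operations each approved by Π on the successively updated states yields a local trace lt with enforced_locally Σ h lt. -/
import Mathlib

inductive Caller | Prog | Ctx
deriving DecidableEq

structure Event (Op : Type) (Arg : Op → Type) where
  caller : Caller
  op : Op
  arg : Arg op

def PolicySpec (Op : Type) (Arg : Op → Type) : Type :=
  List (Event Op Arg) → Caller → (op : Op) → Arg op → Prop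

def enforcedLocally {Op : Type} {Arg : Op → Type} (Sp : PolicySpec Op Arg) :
    List (Event Op Arg) → List (Event Op Arg) → Prop
  | _h, [] => True
  | h, e :: t => Sp h e.caller e.op e.arg ∧ enforcedLocally Sp (e :: h) t

/-- The monitor-state policy refinement transfers to traces: if the policy over
monitor states refines the trace-level specification via the abstraction
relation, the state update preserves abstraction, and every event of the local
trace is a context event approved by the policy on the successively updated
states, then the local trace satisfies `enforced_locally`. -/
theorem mstate_policy_sound {Op : Type} {Arg : Op → Type} {S : Type}
    (Sp : PolicySpec Op Arg)
    (abstracts : S → List (Event Op Arg) → Prop)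
    (Pi : S → (op : Op) → Arg op → Bool)
    (hPi : ∀ s op arg, Pi s op arg = true →
      ∀ h, abstracts s h → Sp h Caller.Ctx op arg)
    (upd : S → Event Op Arg → S)
    (hupd : ∀ s h e, abstracts s h → abstracts (upd s e) (e :: h))
    (s₀ : S) (h : List (Event Op Arg)) (habs : abstracts s₀ h)
    (lt : List (Event Op Arg))
    (happroved : ∀ (i : ℕ) (hi : i < lt.length),
      (lt.get ⟨i, hi⟩).caller = Caller.Ctx ∧
      Pi (List.foldl upd s₀ (lt.take i))
        (lt.get ⟨i, hi⟩).op (lt.get ⟨i, hi⟩).arg = true) :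
    enforcedLocally Sp h lt := by
  induction lt generalizing s₀ h with
  | nil => trivial
  | cons e t ih =>
    obtain ⟨hc0, hp0⟩ := happroved 0 (Nat.succ_pos _)
    refine ⟨?_, ?_⟩
    · simp only [List.get] at hc0 hp0
      rw [hc0]
      exact hPi _ _ _ hp0 h habs
    · exact ih (upd s₀ e) (e :: h) (hupd _ _ _ habs)
        (fun i hi => happroved (i+1) (Nat.succ_lt_succ hi))
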